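/- With the operators E_{ab} (a,b ∈ {1,...,n+m}) on A defined as in the oscillator representation of gl(n|m) (E_{ij} = x_i∂_{x_j} − y_j∂_{y_i}, E_{i,n+r} = x_i∂_{θ_r} − ϑ_r∂_{y_i}, E_{n+r,i} = θ_r∂_{x_i} + y_i∂_{ϑ_r}, E_{n+r,n+s} = θ_r∂_{θ_s} − ϑ_s∂_{ϑ_r}), each E_{ab} commutes with the super-Laplacian Δ = Σ_{i=1}^n ∂_{x_i}∂_{y_i} + Σ_{r=1}^m ∂_{θ_r}∂_{ϑ_r} as operators on A. -/

import Mathlib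

/-!
Only the canonical (anti)commutation relations between coordinates and derivatives matter, so
the argument runs in an arbitrary ring. There `Δ` commutes with every derivative (a product of
two odd derivatives is even), while `⁅Δ, x_i⁆ = ∂_{y_i}`, `⁅Δ, y_j⁆ = ∂_{x_j}`,
`⁅Δ, θ_r⁆ = -∂_{ϑ_r}` and `⁅Δ, ϑ_r⁆ = ∂_{θ_r}`. Hence `⁅Δ, a ∂⁆ = ⁅Δ, a⁆ ∂` for both terms of
`E_{ab}`, and the two resulting second-order operators cancel because derivatives supercommute.
-/

open TensorProduct MvPolynomial

noncomputable section

variable (n m : ℕ)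

/-- bosonic polynomial part -/
abbrev PolyA (n : ℕ) := MvPolynomial (Fin n ⊕ Fin n) ℂ
/-- fermionic exterior part -/
abbrev ExtA (m : ℕ) := ExteriorAlgebra ℂ ((Fin m ⊕ Fin m) → ℂ)
/-- full supersymmetric algebra -/
abbrev SAlg (n m : ℕ) := PolyA n ⊗[ℂ] ExtA m

-- generators
def xv (i : Fin n) : PolyA n := X (Sum.inl i)
def yv (i : Fin n) : PolyA n := X (Sum.inr i)
def θv (r : Fin m) : ExtA m := ExteriorAlgebra.ι ℂ (Pi.single (Sum.inl r) 1)
def ϑv (r : Fin m) : ExtA m := ExteriorAlgebra.ι ℂ (Pi.single (Sum.inr r) 1)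

-- odd superderivations on the exterior part
def dθ (r : Fin m) : Module.End ℂ (ExtA m) :=
  CliffordAlgebra.contractLeft (Q := (0 : QuadraticForm ℂ ((Fin m ⊕ Fin m) → ℂ)))
    (LinearMap.proj (Sum.inl r))
def dϑ (r : Fin m) : Module.End ℂ (ExtA m) :=
  CliffordAlgebra.contractLeft (Q := (0 : QuadraticForm ℂ ((Fin m ⊕ Fin m) → ℂ)))
    (LinearMap.proj (Sum.inr r))

-- operators on the full algebra
def pdx (i : Fin n) : Module.End ℂ (SAlg n m) :=
  TensorProduct.map ((pderiv (Sum.inl i) : Derivation ℂ (PolyA n) (PolyA n)) : PolyA n →ₗ[ℂ] PolyA n) LinearMap.id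
def pdy (i : Fin n) : Module.End ℂ (SAlg n m) :=
  TensorProduct.map ((pderiv (Sum.inr i) : Derivation ℂ (PolyA n) (PolyA n)) : PolyA n →ₗ[ℂ] PolyA n) LinearMap.id
def pdθ (r : Fin m) : Module.End ℂ (SAlg n m) :=
  TensorProduct.map LinearMap.id (dθ m r)
def pdϑ (r : Fin m) : Module.End ℂ (SAlg n m) :=
  TensorProduct.map LinearMap.id (dϑ m r)

-- multiplication operators
def mx (i : Fin n) : Module.End ℂ (SAlg n m) := LinearMap.mulLeft ℂ (xv n i ⊗ₜ[ℂ] 1)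
def mθ (r : Fin m) : Module.End ℂ (SAlg n m) := LinearMap.mulLeft ℂ ((1 : PolyA n) ⊗ₜ[ℂ] θv m r)

def my (i : Fin n) : Module.End ℂ (SAlg n m) := LinearMap.mulLeft ℂ (yv n i ⊗ₜ[ℂ] 1)
def mϑ (r : Fin m) : Module.End ℂ (SAlg n m) := LinearMap.mulLeft ℂ ((1 : PolyA n) ⊗ₜ[ℂ] ϑv m r)

/-- the element η = Σ_i x_i y_i + Σ_r θ_r ϑ_r of the superalgebra -/
def ηelt : SAlg n m :=
  (∑ i : Fin n, (xv n i * yv n i) ⊗ₜ[ℂ] (1 : ExtA m))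
    + ∑ r : Fin m, (1 : PolyA n) ⊗ₜ[ℂ] (θv m r * ϑv m r)

/-- the super-Laplacian Δ = Σ_i ∂_{x_i}∂_{y_i} + Σ_r ∂_{θ_r}∂_{ϑ_r} -/
def ΔS : Module.End ℂ (SAlg n m) :=
  (∑ i : Fin n, pdx n m i ∘ₗ pdy n m i) + ∑ r : Fin m, pdθ n m r ∘ₗ pdϑ n m r
/-- multiplication by η -/
def ηop : Module.End ℂ (SAlg n m) := LinearMap.mulLeft ℂ (ηelt n m)

/-- E_{ij} = x_i∂_{x_j} − y_j∂_{y_i} -/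
def Eij (i j : Fin n) : Module.End ℂ (SAlg n m) := mx n m i ∘ₗ pdx n m j - my n m j ∘ₗ pdy n m i
/-- E_{i,n+r} = x_i∂_{θ_r} − ϑ_r∂_{y_i} -/
def Einr (i : Fin n) (r : Fin m) : Module.End ℂ (SAlg n m) :=
  mx n m i ∘ₗ pdθ n m r - mϑ n m r ∘ₗ pdy n m i
/-- E_{n+r,i} = θ_r∂_{x_i} + y_i∂_{ϑ_r} -/
def Enri (r : Fin m) (i : Fin n) : Module.End ℂ (SAlg n m) :=
  mθ n m r ∘ₗ pdx n m i + my n m i ∘ₗ pdϑ n m r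
/-- E_{n+r,n+s} = θ_r∂_{θ_s} − ϑ_s∂_{ϑ_r} -/
def Enrs (r s : Fin m) : Module.End ℂ (SAlg n m) :=
  mθ n m r ∘ₗ pdθ n m s - mϑ n m s ∘ₗ pdϑ n m r


section WeylClifford

attribute [local instance 100] LieRing.ofAssociativeRing

variable {R : Type*} [Ring R]

theorem mul_lie (a b c : R) : ⁅a * b, c⁆ = a * ⁅b, c⁆ + ⁅a, c⁆ * b := by
  simp only [Ring.lie_def]; noncomm_ring

theorem mul_lie_eq_anticommutators (a b c : R) :
    ⁅a * b, c⁆ = a * (b * c + c * b) - (a * c + c * a) * b := by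
  simp only [Ring.lie_def]; noncomm_ring

theorem lie_mul_of_commute {d q : R} (h : Commute d q) (a : R) :
    ⁅d, a * q⁆ = ⁅d, a⁆ * q := by
  simp only [Ring.lie_def, sub_mul, mul_assoc, h.eq]

theorem Commute.mul_left_of_anticomm {a b c : R} (ha : a * c + c * a = 0)
    (hb : b * c + c * b = 0) : Commute (a * b) c := by
  rw [add_eq_zero_iff_eq_neg] at ha hb
  change a * b * c = c * (a * b)
  rw [mul_assoc, hb, mul_neg, ← mul_assoc, ha, neg_mul, neg_neg, mul_assoc]

variable {ι κ : Type*} [Fintype ι] [Fintype κ] [DecidableEq ι] [DecidableEq κ]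

/-- `d`, `x` are the even derivations and coordinates, `δ`, `ξ` the odd ones; `inl` and `inr`
index the two halves of each pair of dual variables (`x_i`, `y_i`) and (`θ_r`, `ϑ_r`). -/
structure WeylCliffordRelations (d x : ι ⊕ ι → R) (δ ξ : κ ⊕ κ → R) : Prop where
  lie_d_x (u v : ι ⊕ ι) : ⁅d u, x v⁆ = if u = v then 1 else 0
  commute_d_d (u v : ι ⊕ ι) : Commute (d u) (d v)
  commute_d_δ (u : ι ⊕ ι) (w : κ ⊕ κ) : Commute (d u) (δ w)
  commute_d_ξ (u : ι ⊕ ι) (w : κ ⊕ κ) : Commute (d u) (ξ w)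
  commute_x_δ (u : ι ⊕ ι) (w : κ ⊕ κ) : Commute (x u) (δ w)
  anticomm_δ_δ (w w' : κ ⊕ κ) : δ w * δ w' + δ w' * δ w = 0
  anticomm_δ_ξ (w w' : κ ⊕ κ) : δ w * ξ w' + ξ w' * δ w = if w = w' then 1 else 0

def superLaplacian (d : ι ⊕ ι → R) (δ : κ ⊕ κ → R) : R :=
  ∑ k, d (.inl k) * d (.inr k) + ∑ t, δ (.inl t) * δ (.inr t)

namespace WeylCliffordRelations

variable {d x : ι ⊕ ι → R} {δ ξ : κ ⊕ κ → R}

theorem commute_superLaplacian_d (h : WeylCliffordRelations d x δ ξ) (u : ι ⊕ ι) :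
    Commute (superLaplacian d δ) (d u) :=
  .add_left (.sum_left _ _ _ fun _ _ => .mul_left (h.commute_d_d _ _) (h.commute_d_d _ _))
    (.sum_left _ _ _ fun _ _ => .mul_left (h.commute_d_δ _ _).symm (h.commute_d_δ _ _).symm)

theorem commute_superLaplacian_δ (h : WeylCliffordRelations d x δ ξ) (w : κ ⊕ κ) :
    Commute (superLaplacian d δ) (δ w) :=
  .add_left (.sum_left _ _ _ fun _ _ => .mul_left (h.commute_d_δ _ _) (h.commute_d_δ _ _))
    (.sum_left _ _ _ fun _ _ => .mul_left_of_anticomm (h.anticomm_δ_δ _ _) (h.anticomm_δ_δ _ _))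

theorem lie_superLaplacian_x (h : WeylCliffordRelations d x δ ξ) (u : ι ⊕ ι) :
    ⁅superLaplacian d δ, x u⁆ = d u.swap := by
  have hδ (t : κ) : ⁅δ (.inl t) * δ (.inr t), x u⁆ = 0 :=
    (Commute.mul_left (h.commute_x_δ u _).symm (h.commute_x_δ u _).symm).lie_eq
  rw [superLaplacian, add_lie, sum_lie, sum_lie]
  simp only [hδ, mul_lie, h.lie_d_x]
  rcases u with i | i <;> simp

theorem lie_superLaplacian_ξ_inl (h : WeylCliffordRelations d x δ ξ) (r : κ) :
    ⁅superLaplacian d δ, ξ (.inl r)⁆ = -δ (.inr r) := by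
  have hd (k : ι) : ⁅d (.inl k) * d (.inr k), ξ (.inl r)⁆ = 0 :=
    (Commute.mul_left (h.commute_d_ξ _ _) (h.commute_d_ξ _ _)).lie_eq
  rw [superLaplacian, add_lie, sum_lie, sum_lie]
  simp [hd, mul_lie_eq_anticommutators, h.anticomm_δ_ξ]

theorem lie_superLaplacian_ξ_inr (h : WeylCliffordRelations d x δ ξ) (r : κ) :
    ⁅superLaplacian d δ, ξ (.inr r)⁆ = δ (.inl r) := by
  have hd (k : ι) : ⁅d (.inl k) * d (.inr k), ξ (.inr r)⁆ = 0 :=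
    (Commute.mul_left (h.commute_d_ξ _ _) (h.commute_d_ξ _ _)).lie_eq
  rw [superLaplacian, add_lie, sum_lie, sum_lie]
  simp [hd, mul_lie_eq_anticommutators, h.anticomm_δ_ξ]

theorem commute_superLaplacian_E_even_even (h : WeylCliffordRelations d x δ ξ) (i j : ι) :
    Commute (superLaplacian d δ) (x (.inl i) * d (.inl j) - x (.inr j) * d (.inr i)) := by
  rw [commute_iff_lie_eq, lie_sub, lie_mul_of_commute (h.commute_superLaplacian_d _),
    lie_mul_of_commute (h.commute_superLaplacian_d _), h.lie_superLaplacian_x,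
    h.lie_superLaplacian_x, Sum.swap_inl, Sum.swap_inr, sub_eq_zero]
  exact h.commute_d_d _ _

theorem commute_superLaplacian_E_even_odd (h : WeylCliffordRelations d x δ ξ) (i : ι) (r : κ) :
    Commute (superLaplacian d δ) (x (.inl i) * δ (.inl r) - ξ (.inr r) * d (.inr i)) := by
  rw [commute_iff_lie_eq, lie_sub, lie_mul_of_commute (h.commute_superLaplacian_δ _),
    lie_mul_of_commute (h.commute_superLaplacian_d _), h.lie_superLaplacian_x,
    h.lie_superLaplacian_ξ_inr, Sum.swap_inl, sub_eq_zero]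
  exact h.commute_d_δ _ _

theorem commute_superLaplacian_E_odd_even (h : WeylCliffordRelations d x δ ξ) (r : κ) (i : ι) :
    Commute (superLaplacian d δ) (ξ (.inl r) * d (.inl i) + x (.inr i) * δ (.inr r)) := by
  rw [commute_iff_lie_eq, lie_add, lie_mul_of_commute (h.commute_superLaplacian_d _),
    lie_mul_of_commute (h.commute_superLaplacian_δ _), h.lie_superLaplacian_x,
    h.lie_superLaplacian_ξ_inl, Sum.swap_inr, neg_mul, neg_add_eq_zero]
  exact (h.commute_d_δ _ _).symm

theorem commute_superLaplacian_E_odd_odd (h : WeylCliffordRelations d x δ ξ) (r s : κ) :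
    Commute (superLaplacian d δ) (ξ (.inl r) * δ (.inl s) - ξ (.inr s) * δ (.inr r)) := by
  rw [commute_iff_lie_eq, lie_sub, lie_mul_of_commute (h.commute_superLaplacian_δ _),
    lie_mul_of_commute (h.commute_superLaplacian_δ _), h.lie_superLaplacian_ξ_inl,
    h.lie_superLaplacian_ξ_inr, neg_mul, sub_eq_neg_add, ← neg_add, h.anticomm_δ_δ, neg_zero]

end WeylCliffordRelations

end WeylClifford

theorem MvPolynomial.pderiv_comm {σ R : Type*} [CommRing R] (u v : σ) (p : MvPolynomial σ R) :
    pderiv u (pderiv v p) = pderiv v (pderiv u p) := by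
  have h : ⁅pderiv (R := R) u, pderiv (R := R) v⁆ = 0 := by
    refine derivation_ext fun s => ?_
    rw [Derivation.commutator_apply]
    classical
    simp [pderiv_X, Pi.single_apply, apply_ite]
  rw [← sub_eq_zero, ← Derivation.commutator_apply, h, Derivation.zero_apply]

/-- These are `pdx`, `pdy`, `pdθ`, `pdϑ`, `mx`, `my`, `mθ`, `mϑ` indexed uniformly: for instance
`pdy n m i` and `evenDeriv n m (.inr i)` are definitionally equal. -/
def evenDeriv (u : Fin n ⊕ Fin n) : Module.End ℂ (SAlg n m) :=
  TensorProduct.map ((pderiv u : Derivation ℂ (PolyA n) (PolyA n)) : PolyA n →ₗ[ℂ] PolyA n)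
    LinearMap.id

def oddDeriv (w : Fin m ⊕ Fin m) : Module.End ℂ (SAlg n m) :=
  TensorProduct.map LinearMap.id
    (CliffordAlgebra.contractLeft (Q := (0 : QuadraticForm ℂ ((Fin m ⊕ Fin m) → ℂ)))
      (LinearMap.proj w))

def evenMul (u : Fin n ⊕ Fin n) : Module.End ℂ (SAlg n m) :=
  LinearMap.mulLeft ℂ ((X u : PolyA n) ⊗ₜ[ℂ] (1 : ExtA m))

def oddMul (w : Fin m ⊕ Fin m) : Module.End ℂ (SAlg n m) :=
  LinearMap.mulLeft ℂ ((1 : PolyA n) ⊗ₜ[ℂ] ExteriorAlgebra.ι ℂ (Pi.single w 1))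

theorem lie_evenDeriv_evenMul (u v : Fin n ⊕ Fin n) :
    ⁅evenDeriv n m u, evenMul n m v⁆ = if u = v then 1 else 0 := by
  refine TensorProduct.ext' fun p e => ?_
  by_cases h : u = v
  · subst h
    simp [Ring.lie_def, evenDeriv, evenMul, Algebra.TensorProduct.tmul_mul_tmul, add_tmul]
  · simp [Ring.lie_def, evenDeriv, evenMul, h, Algebra.TensorProduct.tmul_mul_tmul,
      pderiv_X_of_ne (Ne.symm h)]

theorem commute_evenDeriv_evenDeriv (u v : Fin n ⊕ Fin n) :
    Commute (evenDeriv n m u) (evenDeriv n m v) :=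
  TensorProduct.ext' fun p e => by simp [evenDeriv, MvPolynomial.pderiv_comm u v p]

theorem commute_evenDeriv_oddDeriv (u : Fin n ⊕ Fin n) (w : Fin m ⊕ Fin m) :
    Commute (evenDeriv n m u) (oddDeriv n m w) :=
  TensorProduct.ext' fun p e => by simp [evenDeriv, oddDeriv]

theorem commute_evenDeriv_oddMul (u : Fin n ⊕ Fin n) (w : Fin m ⊕ Fin m) :
    Commute (evenDeriv n m u) (oddMul n m w) :=
  TensorProduct.ext' fun p e => by
    simp [evenDeriv, oddMul, Algebra.TensorProduct.tmul_mul_tmul]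

theorem commute_evenMul_oddDeriv (u : Fin n ⊕ Fin n) (w : Fin m ⊕ Fin m) :
    Commute (evenMul n m u) (oddDeriv n m w) :=
  TensorProduct.ext' fun p e => by
    simp [evenMul, oddDeriv, Algebra.TensorProduct.tmul_mul_tmul]

theorem oddDeriv_anticomm (w w' : Fin m ⊕ Fin m) :
    oddDeriv n m w * oddDeriv n m w' + oddDeriv n m w' * oddDeriv n m w = 0 :=
  TensorProduct.ext' fun p e => by
    simp only [oddDeriv, LinearMap.add_apply, Module.End.mul_apply, TensorProduct.map_tmul,
      LinearMap.id_apply, ← tmul_add, LinearMap.zero_apply]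
    rw [CliffordAlgebra.contractLeft_comm, neg_add_cancel, tmul_zero]

theorem oddDeriv_oddMul_anticomm (w w' : Fin m ⊕ Fin m) :
    oddDeriv n m w * oddMul n m w' + oddMul n m w' * oddDeriv n m w = if w = w' then 1 else 0 :=
  TensorProduct.ext' fun p e => by
    by_cases h : w = w'
    · subst h
      simp [oddDeriv, oddMul, Algebra.TensorProduct.tmul_mul_tmul,
        CliffordAlgebra.contractLeft_ι_mul, tmul_sub]
    · simp [oddDeriv, oddMul, h, Algebra.TensorProduct.tmul_mul_tmul,
        CliffordAlgebra.contractLeft_ι_mul, ExteriorAlgebra.ι, tmul_neg]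

theorem weylCliffordRelations :
    WeylCliffordRelations (evenDeriv n m) (evenMul n m) (oddDeriv n m) (oddMul n m) where
  lie_d_x := lie_evenDeriv_evenMul n m
  commute_d_d := commute_evenDeriv_evenDeriv n m
  commute_d_δ := commute_evenDeriv_oddDeriv n m
  commute_d_ξ := commute_evenDeriv_oddMul n m
  commute_x_δ := commute_evenMul_oddDeriv n m
  anticomm_δ_δ := oddDeriv_anticomm n m
  anticomm_δ_ξ := oddDeriv_oddMul_anticomm n m

theorem gl_commutes_with_laplacian :
    (∀ i j : Fin n, Eij n m i j ∘ₗ ΔS n m = ΔS n m ∘ₗ Eij n m i j)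
    ∧ (∀ (i : Fin n) (r : Fin m), Einr n m i r ∘ₗ ΔS n m = ΔS n m ∘ₗ Einr n m i r)
    ∧ (∀ (r : Fin m) (i : Fin n), Enri n m r i ∘ₗ ΔS n m = ΔS n m ∘ₗ Enri n m r i)
    ∧ (∀ r s : Fin m, Enrs n m r s ∘ₗ ΔS n m = ΔS n m ∘ₗ Enrs n m r s) := by
  have h := weylCliffordRelations n m
  exact ⟨fun i j => (h.commute_superLaplacian_E_even_even i j).eq.symm,
    fun i r => (h.commute_superLaplacian_E_even_odd i r).eq.symm,
    fun r i => (h.commute_superLaplacian_E_odd_even r i).eq.symm,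
    fun r s => (h.commute_superLaplacian_E_odd_odd r s).eq.symm⟩
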